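/- Let a > 0 and let F : ℝ⁴ → ℝ⁴ be the vector field F(q₁, q₂, v₁, v₂) = (v₁, v₂, −2q₁ + q₂ + q₂² − 2q₁q₂, a(−2q₂ + q₁ + 2q₁q₂ − q₁²)). The Jacobian matrix of F at the equilibrium (−2, −1, 0, 0) has characteristic polynomial X⁴ + 6aX² − 9a; its eigenvalues are the real pair ±√(3√(a² + a) − 3a) and the purely imaginary pair ±i√(3√(a² + a) + 3a). In particular √(3√(a² + a) − 3a) > 0 is a real positive eigenvalue, so the equilibrium (−2, −1) is linearly unstable, with one stable, one unstable and a two-dimensional centre direction. -/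

import Mathlib

open Polynomial

/-- The vector field `F(q₁, q₂, v₁, v₂) =
(v₁, v₂, -2q₁ + q₂ + q₂² - 2q₁q₂, a(-2q₂ + q₁ + 2q₁q₂ - q₁²))` on ℝ⁴ governing
the symmetric invariant manifold of the 6-particle alternating FPU α-chain
(α = 1, m = 1/a). -/
def fpuField (a : ℝ) (x : Fin 4 → ℝ) : Fin 4 → ℝ :=
  ![x 2, x 3,
    -2 * x 0 + x 1 + (x 1) ^ 2 - 2 * x 0 * x 1,
    a * (-2 * x 1 + x 0 + 2 * x 0 * x 1 - (x 0) ^ 2)]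

/-- The Jacobian matrix of a map `ℝ⁴ → ℝ⁴` at the point `x`. -/
noncomputable def jacobian (F : (Fin 4 → ℝ) → Fin 4 → ℝ) (x : Fin 4 → ℝ) :
    Matrix (Fin 4) (Fin 4) ℝ :=
  Matrix.of fun i j => fderiv ℝ F x (Pi.single j 1) i

/-!
The vector field is a second-order system `q̈ = f(q)` written on `(q, v)`, so its Jacobian is
`[[0, 1], [Df, 0]]` and its characteristic polynomial is `χ_{Df}(X²)`. At `(-2, -1)` the force
Jacobian `Df` has trace `-6a` and determinant `-9a`, so `χ = (X² - u²)(X² - v²)` with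
`u² = 3√(a² + a) - 3a > 0` and `v² = -(3√(a² + a) + 3a) < 0`, giving a real pair `±u` and an
imaginary pair `±v`.
-/

/-- The linearization `ẋ = Mx` on `(q, v)` of a second-order system `q̈ = f(q)` with `Df = K`. -/
def Matrix.firstOrder {R : Type*} [Zero R] [One R] (K : Matrix (Fin 2) (Fin 2) R) :
    Matrix (Fin 4) (Fin 4) R :=
  !![0, 0, 1, 0; 0, 0, 0, 1; K 0 0, K 0 1, 0, 0; K 1 0, K 1 1, 0, 0]

theorem Matrix.firstOrder_mulVec {R : Type*} [NonAssocSemiring R] (K : Matrix (Fin 2) (Fin 2) R)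
    (v : Fin 4 → R) :
    K.firstOrder.mulVec v = ![v 2, v 3, K 0 0 * v 0 + K 0 1 * v 1, K 1 0 * v 0 + K 1 1 * v 1] := by
  ext i
  fin_cases i <;> simp [Matrix.firstOrder, Matrix.vecHead, Matrix.vecTail]

theorem Matrix.charpoly_firstOrder {R : Type*} [CommRing R] [Nontrivial R]
    (K : Matrix (Fin 2) (Fin 2) R) :
    K.firstOrder.charpoly = K.charpoly.comp (X ^ 2) := by
  have hsucc : (2 : Fin 4).succAbove 2 = 3 := rfl
  rw [Matrix.charpoly_fin_two, Matrix.charpoly, Matrix.det_succ_row_zero]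
  simp only [Fin.sum_univ_succ, Finset.univ_unique, Finset.sum_singleton, Matrix.det_fin_three,
    Matrix.submatrix_apply, Matrix.charmatrix_apply, Matrix.diagonal_apply, Matrix.firstOrder,
    Matrix.of_apply, Matrix.cons_val, Matrix.trace_fin_two, Matrix.det_fin_two, hsucc,
    Fin.succ_zero_eq_one, Fin.succ_one_eq_two, Fin.zero_succAbove, Fin.succ_succAbove_one,
    Fin.succAbove_ne_zero_zero, Fin.default_eq_zero, Fin.val_succ, Fin.val_zero, Fin.isValue,
    Fin.reduceSucc, Fin.reduceEq, ne_eq, not_false_eq_true, ↓reduceIte, map_zero, map_one, map_add,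
    map_sub, map_mul, add_comp, sub_comp, mul_comp, pow_comp, X_comp, C_comp, pow_zero]
  ring

theorem jacobian_eq_of_hasFDerivAt {F : (Fin 4 → ℝ) → Fin 4 → ℝ} {x : Fin 4 → ℝ}
    {M : Matrix (Fin 4) (Fin 4) ℝ}
    (h : HasFDerivAt F (LinearMap.toContinuousLinearMap (Matrix.toLin' M)) x) :
    jacobian F x = M := by
  ext i j
  simp [jacobian, h.fderiv]

theorem Polynomial.roots_biquadratic {R : Type*} [CommRing R] [IsDomain R] (u v : R) :
    (X ^ 4 - C (u ^ 2 + v ^ 2) * X ^ 2 + C (u ^ 2 * v ^ 2) : R[X]).roots = {u, -u, v, -v} := by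
  rw [← roots_multiset_prod_X_sub_C {u, -u, v, -v}]
  congr 1
  simp only [Multiset.insert_eq_cons, Multiset.map_cons, Multiset.map_singleton,
    Multiset.prod_cons, Multiset.prod_singleton, map_neg, map_add, map_mul, C_pow]
  ring

theorem Real.lt_sqrt_sq_add_self {a : ℝ} (ha : 0 < a) : a < √(a ^ 2 + a) :=
  (Real.lt_sqrt ha.le).2 (by linarith)

def fpuForceJacobian (a : ℝ) (x : Fin 4 → ℝ) : Matrix (Fin 2) (Fin 2) ℝ :=
  !![-2 - 2 * x 1, 1 + 2 * x 1 - 2 * x 0; a * (1 + 2 * x 1 - 2 * x 0), a * (-2 + 2 * x 0)]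

theorem hasFDerivAt_fpuField (a : ℝ) (x : Fin 4 → ℝ) :
    HasFDerivAt (fpuField a)
      (LinearMap.toContinuousLinearMap (Matrix.toLin' (fpuForceJacobian a x).firstOrder)) x := by
  have hc (i : Fin 4) :
      HasFDerivAt (fun y : Fin 4 → ℝ => y i)
        (ContinuousLinearMap.proj (R := ℝ) (φ := fun _ : Fin 4 => ℝ) i) x :=
    hasFDerivAt_apply i x
  refine hasFDerivAt_pi'' fun i => ?_
  fin_cases i
  · refine (hc 2).congr_fderiv ?_
    ext v; simp [Matrix.firstOrder_mulVec]
  · refine (hc 3).congr_fderiv ?_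
    ext v; simp [Matrix.firstOrder_mulVec]
  · refine ((((hc 0).const_mul (-2)).add (hc 1)).add ((hc 1).pow 2) |>.sub
      (((hc 0).const_mul 2).mul (hc 1))).congr_fderiv ?_
    ext v
    simp only [ContinuousLinearMap.comp_apply, LinearMap.coe_toContinuousLinearMap',
      Matrix.toLin'_apply, Matrix.firstOrder_mulVec, fpuForceJacobian, Matrix.of_apply,
      Fin.reduceFinMk, Matrix.cons_val, sub_apply, add_apply, smul_apply,
      ContinuousLinearMap.proj_apply, smul_eq_mul]
    ring
  · refine (((((hc 1).const_mul (-2)).add (hc 0)).add (((hc 0).const_mul 2).mul (hc 1))).sub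
      ((hc 0).pow 2) |>.const_mul a).congr_fderiv ?_
    ext v
    simp only [ContinuousLinearMap.comp_apply, LinearMap.coe_toContinuousLinearMap',
      Matrix.toLin'_apply, Matrix.firstOrder_mulVec, fpuForceJacobian, Matrix.of_apply,
      Fin.reduceFinMk, Matrix.cons_val, sub_apply, add_apply, smul_apply,
      ContinuousLinearMap.proj_apply, smul_eq_mul]
    ring

theorem fpuField_negtwo_negone (a : ℝ) : fpuField a ![-2, -1, 0, 0] = 0 := by
  simp [fpuField, ← sq]

theorem charpoly_jacobian_fpuField_negtwo_negone (a : ℝ) :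
    (jacobian (fpuField a) ![-2, -1, 0, 0]).charpoly = X ^ 4 + C (6 * a) * X ^ 2 - C (9 * a) := by
  have htrace : (fpuForceJacobian a ![-2, -1, 0, 0]).trace = -(6 * a) := by
    rw [fpuForceJacobian, Matrix.trace_fin_two_of]
    simp only [Matrix.cons_val]
    ring
  have hdet : (fpuForceJacobian a ![-2, -1, 0, 0]).det = -(9 * a) := by
    rw [fpuForceJacobian, Matrix.det_fin_two_of]
    simp only [Matrix.cons_val]
    ring
  rw [jacobian_eq_of_hasFDerivAt (hasFDerivAt_fpuField a _), Matrix.charpoly_firstOrder,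
    Matrix.charpoly_fin_two, htrace, hdet]
  simp only [sub_comp, add_comp, mul_comp, neg_comp, X_comp, C_comp, X_pow_comp, map_neg]
  ring

theorem roots_map_X_pow_four_add_C_mul_X_sq_sub_C {a : ℝ} (ha : 0 < a) :
    ((X ^ 4 + C (6 * a) * X ^ 2 - C (9 * a) : ℝ[X]).map (algebraMap ℝ ℂ)).roots =
      {((√(3 * √(a ^ 2 + a) - 3 * a) : ℝ) : ℂ), -((√(3 * √(a ^ 2 + a) - 3 * a) : ℝ) : ℂ),
        Complex.I * ((√(3 * √(a ^ 2 + a) + 3 * a) : ℝ) : ℂ),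
        -(Complex.I * ((√(3 * √(a ^ 2 + a) + 3 * a) : ℝ) : ℂ))} := by
  set s := √(a ^ 2 + a)
  have hs : s ^ 2 = a ^ 2 + a := Real.sq_sqrt (by positivity)
  have hu : ((√(3 * s - 3 * a) : ℝ) : ℂ) ^ 2 = ((3 * s - 3 * a : ℝ) : ℂ) := by
    rw [← Complex.ofReal_pow, Real.sq_sqrt (by linarith [Real.lt_sqrt_sq_add_self ha])]
  have hv : (Complex.I * ((√(3 * s + 3 * a) : ℝ) : ℂ)) ^ 2 = -((3 * s + 3 * a : ℝ) : ℂ) := by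
    rw [mul_pow, Complex.I_sq, ← Complex.ofReal_pow, Real.sq_sqrt (by positivity), neg_one_mul]
  have hsum : ((3 * s - 3 * a : ℝ) : ℂ) + -((3 * s + 3 * a : ℝ) : ℂ) = -((6 * a : ℝ) : ℂ) := by
    push_cast; ring
  have hprod : ((3 * s - 3 * a : ℝ) : ℂ) * -((3 * s + 3 * a : ℝ) : ℂ) = -((9 * a : ℝ) : ℂ) := by
    rw [mul_neg, ← Complex.ofReal_mul]; congr 2; linear_combination 9 * hs
  rw [← roots_biquadratic, hu, hv, hsum, hprod]
  simp only [Polynomial.map_sub, Polynomial.map_add, Polynomial.map_mul, Polynomial.map_pow,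
    map_X, map_C, map_neg, Complex.coe_algebraMap]
  congr 1
  ring

/-- At the equilibrium `(-2, -1, 0, 0)` of the vector field `F`, the Jacobian
has characteristic polynomial `X⁴ + 6aX² - 9a`, whose (complex) roots, i.e.
the eigenvalues, are the real pair `±√(3√(a² + a) - 3a)` and the purely
imaginary pair `±i√(3√(a² + a) + 3a)`; in particular `√(3√(a² + a) - 3a) > 0`
is a real positive eigenvalue, so the equilibrium `(-2, -1)` is linearly
unstable, with one stable, one unstable and a two-dimensional centre
direction. -/
theorem jacobian_at_negtwo_negone (a : ℝ) (ha : 0 < a) :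
    fpuField a ![-2, -1, 0, 0] = 0 ∧
    (jacobian (fpuField a) ![-2, -1, 0, 0]).charpoly =
      X ^ 4 + C (6 * a) * X ^ 2 - C (9 * a) ∧
    ((jacobian (fpuField a) ![-2, -1, 0, 0]).charpoly.map (algebraMap ℝ ℂ)).roots =
      {((Real.sqrt (3 * Real.sqrt (a ^ 2 + a) - 3 * a) : ℝ) : ℂ),
        -((Real.sqrt (3 * Real.sqrt (a ^ 2 + a) - 3 * a) : ℝ) : ℂ),
        Complex.I * ((Real.sqrt (3 * Real.sqrt (a ^ 2 + a) + 3 * a) : ℝ) : ℂ),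
        -(Complex.I * ((Real.sqrt (3 * Real.sqrt (a ^ 2 + a) + 3 * a) : ℝ) : ℂ))} ∧
    0 < Real.sqrt (3 * Real.sqrt (a ^ 2 + a) - 3 * a) := by
  have hcharpoly := charpoly_jacobian_fpuField_negtwo_negone a
  refine ⟨fpuField_negtwo_negone a, hcharpoly, hcharpoly ▸ roots_map_X_pow_four_add_C_mul_X_sq_sub_C ha, ?_⟩
  exact Real.sqrt_pos.2 (by linarith [Real.lt_sqrt_sq_add_self ha])
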